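/- arXiv:2301.03849 — 4 statements merged into one kernel-verified Lean document; each statement's English description precedes it below -/
import Mathlib

section
/- A linear map L : M_{d_A}(ℂ) → M_{d_B}(ℂ) satisfies the covariance condition L(conj(π_A(x)) X π_A(x)ᵀ) = π_B(x) L(X) π_B(x)* for all x ∈ G and X if and only if its Choi matrix C_L = (1/d_A) ∑_{i,j} e_{ij} ⊗ L(e_{ij}) commutes with π_A(x) ⊗ π_B(x) for every x ∈ G. -/
/-!
Multiplying the Choi matrix `∑ i j, e_ij ⊗ L e_ij` by `A ⊗ B` on the left (right) gives the Choi
matrix of `X ↦ B L(Aᵀ X)` (of `X ↦ L(X Aᵀ) B`), and a linear map is determined by its Choi matrix.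
So `π_A(x) ⊗ π_B(x)` commutes with the Choi matrix iff `V L(Uᵀ X) = L(X Uᵀ) V` for all `X`, where
`U = π_A(x)`, `V = π_B(x)`; since `Uᵀ` is unitary with inverse `conj U`, substituting `X ↦ Uᵀ X`
turns this into the covariance condition.
-/

open Matrix Kronecker

namespace Matrix

variable {R n m : Type*} [CommRing R] [Fintype n] [DecidableEq n] [Fintype m]

def choiMatrix (L : Matrix n n R →ₗ[R] Matrix m m R) : Matrix (n × m) (n × m) R :=
  ∑ i, ∑ j, single i j (1 : R) ⊗ₖ L (single i j 1)

omit [Fintype m] in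
@[simp]
theorem choiMatrix_apply (L : Matrix n n R →ₗ[R] Matrix m m R) (i j : n) (p q : m) :
    choiMatrix L (i, p) (j, q) = L (single i j 1) p q := by
  simp [choiMatrix, sum_apply, single, ite_and]

omit [Fintype m] in
theorem choiMatrix_injective :
    Function.Injective (choiMatrix : (Matrix n n R →ₗ[R] Matrix m m R) → _) := by
  intro L L' h
  refine ext_linearMap _ fun i j => LinearMap.ext_ring <| ext fun p q => ?_
  simpa using congrFun (congrFun h (i, p)) (j, q)

theorem transpose_mul_single_one (A : Matrix n n R) (i j : n) :
    Aᵀ * single i j 1 = ∑ k, A i k • single k j 1 := by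
  ext a b
  simp [mul_apply, sum_apply, single, ite_and]

theorem single_one_mul_transpose (A : Matrix n n R) (i j : n) :
    single i j 1 * Aᵀ = ∑ k, A k j • single i k 1 := by
  ext a b
  simp [mul_apply, sum_apply, single, ite_and]

theorem kronecker_mul_choiMatrix (A : Matrix n n R) (B : Matrix m m R)
    (L : Matrix n n R →ₗ[R] Matrix m m R) :
    (A ⊗ₖ B) * choiMatrix L =
      choiMatrix (LinearMap.mulLeft R B ∘ₗ L ∘ₗ LinearMap.mulLeft R Aᵀ) := by
  ext ⟨i, p⟩ ⟨j, q⟩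
  simp only [choiMatrix_apply, LinearMap.comp_apply, LinearMap.mulLeft_apply,
    transpose_mul_single_one, map_sum, map_smul, mul_apply, Fintype.sum_prod_type,
    kroneckerMap_apply, sum_apply, smul_apply, smul_eq_mul, Finset.mul_sum]
  exact Finset.sum_congr rfl fun k _ => Finset.sum_congr rfl fun r _ => by ring

theorem choiMatrix_mul_kronecker (A : Matrix n n R) (B : Matrix m m R)
    (L : Matrix n n R →ₗ[R] Matrix m m R) :
    choiMatrix L * (A ⊗ₖ B) =
      choiMatrix (LinearMap.mulRight R B ∘ₗ L ∘ₗ LinearMap.mulRight R Aᵀ) := by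
  ext ⟨i, p⟩ ⟨j, q⟩
  simp only [choiMatrix_apply, LinearMap.comp_apply, LinearMap.mulRight_apply,
    single_one_mul_transpose, map_sum, map_smul, mul_apply, Fintype.sum_prod_type,
    kroneckerMap_apply, sum_apply, smul_apply, smul_eq_mul, Finset.mul_sum]
  exact Finset.sum_congr rfl fun k _ => Finset.sum_congr rfl fun r _ => by ring

theorem commute_kronecker_choiMatrix_iff (A : Matrix n n R) (B : Matrix m m R)
    (L : Matrix n n R →ₗ[R] Matrix m m R) :
    Commute (A ⊗ₖ B) (choiMatrix L) ↔ ∀ X, B * L (Aᵀ * X) = L (X * Aᵀ) * B := by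
  rw [Commute, SemiconjBy, kronecker_mul_choiMatrix, choiMatrix_mul_kronecker,
    choiMatrix_injective.eq_iff, LinearMap.ext_iff]
  rfl

end Matrix

theorem Units.map_conj_eq_conj_map_iff {A B : Type*} [Monoid A] [Monoid B] (f : A → B)
    (u : Aˣ) (v : Bˣ) :
    (∀ x, f (↑u⁻¹ * x * u) = v * f x * ↑v⁻¹) ↔ ∀ x, v * f (u * x) = f (x * u) * v := by
  constructor
  · intro h x
    rw [eq_comm, ← Units.eq_mul_inv_iff_mul_eq, ← h, u.inv_mul_cancel_left]
  · intro h x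
    rw [Units.eq_mul_inv_iff_mul_eq, ← h, u.mul_inv_cancel_left]

theorem stmt_3 (G : Type*) [Group G] (dA dB : ℕ)
    (πA : G →* Matrix.unitaryGroup (Fin dA) ℂ)
    (πB : G →* Matrix.unitaryGroup (Fin dB) ℂ)
    (L : Matrix (Fin dA) (Fin dA) ℂ →ₗ[ℂ] Matrix (Fin dB) (Fin dB) ℂ) :
    (∀ (x : G) (X : Matrix (Fin dA) (Fin dA) ℂ),
        L ((πA x : Matrix (Fin dA) (Fin dA) ℂ).map (starRingEnd ℂ) * X *
              (πA x : Matrix (Fin dA) (Fin dA) ℂ)ᵀ)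
          = (πB x : Matrix (Fin dB) (Fin dB) ℂ) * L X * (πB x : Matrix (Fin dB) (Fin dB) ℂ)ᴴ) ↔
    (∀ x : G,
        ((πA x : Matrix (Fin dA) (Fin dA) ℂ) ⊗ₖ (πB x : Matrix (Fin dB) (Fin dB) ℂ)) *
            ((dA : ℂ)⁻¹ • ∑ i : Fin dA, ∑ j : Fin dA,
              (Matrix.single i j (1 : ℂ)) ⊗ₖ L (Matrix.single i j (1 : ℂ)))
          = ((dA : ℂ)⁻¹ • ∑ i : Fin dA, ∑ j : Fin dA,
              (Matrix.single i j (1 : ℂ)) ⊗ₖ L (Matrix.single i j (1 : ℂ))) *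
            ((πA x : Matrix (Fin dA) (Fin dA) ℂ) ⊗ₖ (πB x : Matrix (Fin dB) (Fin dB) ℂ))) := by
  refine forall_congr' fun x => ?_
  set U : Matrix (Fin dA) (Fin dA) ℂ := ↑(πA x)
  set V : Matrix (Fin dB) (Fin dB) ℂ := ↑(πB x)
  have hscale : Commute (U ⊗ₖ V) ((dA : ℂ)⁻¹ • Matrix.choiMatrix L) ↔
      Commute (U ⊗ₖ V) (Matrix.choiMatrix L) := by
    rcases eq_or_ne dA 0 with rfl | hdA
    · exact iff_of_true (Subsingleton.elim _ _) (Subsingleton.elim _ _)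
    · exact Commute.smul_right_iff₀ (by simpa)
  change _ ↔ Commute _ ((dA : ℂ)⁻¹ • Matrix.choiMatrix L)
  rw [hscale, Matrix.commute_kronecker_choiMatrix_iff]
  -- the inverse of the unitary `Uᵀ` is `star Uᵀ`, which unfolds to `U.map (starRingEnd ℂ)`
  exact Units.map_conj_eq_conj_map_iff L
    (Unitary.toUnits (Matrix.UnitaryGroup.transpose (πA x))) (Unitary.toUnits (πB x))
end

section
/- Every linear map L : M_d(ℂ) → M_d(ℂ) that is covariant under the signed symmetric group H_d (i.e. L(H X Hᵀ) = H L(X) Hᵀ for all H ∈ H_d) is a linear combination of the four maps ψ₀(X) = (Tr X / d)·Id_d, ψ₁(X) = X, ψ₂(X) = Xᵀ, and ψ₃(X) = diag(X). -/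
/-!
Expand `L` in matrix units: `m(k,l,i,j) := L (single k l 1) i j`. Conjugating by the sign matrix
that flips only the coordinate `t` multiplies `single k l 1` by `ε(k) ε(l)` and the `(i, j)` entry
of its image by `ε(i) ε(j)`, so `m(k,l,i,j) ≠ 0` forces every `t` to occur an even number of times
among `k, l, i, j`, i.e. `{k, l} = {i, j}` as multisets. Since permutations act 2-transitively, the
surviving coefficients take only the four values `m(k,k,k,k)`, `m(k,k,i,i)`, `m(k,l,k,l)`,
`m(k,l,l,k)` (`k ≠ i`, `k ≠ l`), which are the coefficients of a combination of
`X ↦ tr X • 1`, `X`, `Xᵀ` and `diagonal (diag X)`.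
-/

open Matrix

lemma paired_of_forall_iff {n : Type*} {k l i j : n}
    (h : ∀ t : n, ((k = t ↔ l = t) ↔ (i = t ↔ j = t))) :
    (k = l ∧ i = j) ∨ (k = i ∧ l = j) ∨ (k = j ∧ l = i) := by
  have hk := h k
  have hl := h l
  have hi := h i
  grind

lemma Equiv.Perm.exists_apply_eq_and_apply_eq {n : Type*} {p q k l : n} (hpq : p ≠ q)
    (hkl : k ≠ l) : ∃ σ : Equiv.Perm n, σ p = k ∧ σ q = l :=
  MulAction.is_two_pretransitive_iff.mp (Equiv.Perm.isMultiplyPretransitive n 2) hpq hkl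

variable {n R : Type*} [Fintype n] [DecidableEq n]

def signedPerm [Zero R] (s : n → R) (σ : Equiv.Perm n) : Matrix n n R :=
  of fun i j => if i = σ j then s j else 0

lemma signedPerm_mul_mul_transpose_apply [CommRing R] (s : n → R) (σ : Equiv.Perm n)
    (X : Matrix n n R) (i j : n) :
    (signedPerm s σ * X * (signedPerm s σ)ᵀ) (σ i) (σ j) = s i * X i j * s j := by
  simp [signedPerm, mul_apply, σ.injective.eq_iff, mul_comm]

lemma signedPerm_mul_single_mul_transpose [CommRing R] (s : n → R) (σ : Equiv.Perm n)
    (k l : n) (a : R) :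
    signedPerm s σ * single k l a * (signedPerm s σ)ᵀ = (s k * s l) • single (σ k) (σ l) a := by
  ext i j
  obtain ⟨i, rfl⟩ := σ.surjective i
  obtain ⟨j, rfl⟩ := σ.surjective j
  rw [signedPerm_mul_mul_transpose_apply]
  simp only [single_apply, Matrix.smul_apply, smul_eq_mul, σ.injective.eq_iff]
  grind

def IsSignedPermCovariant [CommRing R] (L : Matrix n n R →ₗ[R] Matrix n n R) : Prop :=
  ∀ (s : n → R) (σ : Equiv.Perm n), (∀ i, s i = 1 ∨ s i = -1) → ∀ X,
    L (signedPerm s σ * X * (signedPerm s σ)ᵀ) = signedPerm s σ * L X * (signedPerm s σ)ᵀ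

def hyperoctahedralLinearMap [CommRing R] (β b c e : R) : Matrix n n R →ₗ[R] Matrix n n R :=
  β • (traceLinearMap n R R).smulRight 1 + b • LinearMap.id +
    c • (transposeLinearEquiv n n R R).toLinearMap +
    e • diagonalLinearMap n R R ∘ₗ diagLinearMap n R R

@[simp]
lemma hyperoctahedralLinearMap_apply [CommRing R] (β b c e : R) (X : Matrix n n R) :
    hyperoctahedralLinearMap β b c e X =
      β • X.trace • (1 : Matrix n n R) + b • X + c • Xᵀ + e • diagonal X.diag :=
  rfl

lemma eq_hyperoctahedralLinearMap_of_apply_single [CommRing R]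
    {L : Matrix n n R →ₗ[R] Matrix n n R} {α β b c : R}
    (hα : ∀ k, L (single k k 1) k k = α)
    (hβ : ∀ {k i}, k ≠ i → L (single k k 1) i i = β)
    (hb : ∀ {k l}, k ≠ l → L (single k l 1) k l = b)
    (hc : ∀ {k l}, k ≠ l → L (single k l 1) l k = c)
    (h0 : ∀ {k l i j}, ¬((k = l ∧ i = j) ∨ (k = i ∧ l = j) ∨ (k = j ∧ l = i)) →
      L (single k l 1) i j = 0) :
    L = hyperoctahedralLinearMap β b c (α - β - b - c) := by
  refine ext_linearMap (h := fun k l => LinearMap.ext_ring ?_)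
  ext i j
  simp only [LinearMap.comp_apply, singleLinearMap_apply, hyperoctahedralLinearMap_apply]
  by_cases hkl : k = l
  · subst hkl
    by_cases hij : i = j
    · subst hij
      by_cases hki : k = i
      · subst hki
        -- all four maps contribute to this entry, whence `e = α - β - b - c`
        simp [hα]
      · simp [hβ hki, hki]
    · have hkij : ¬(k = i ∧ k = j) := fun h => hij (h.1.symm.trans h.2)
      rw [h0 (by tauto)]
      simp [hkij, hij, one_apply_ne, diagonal_apply_ne]
  · by_cases hkli : k = i ∧ l = j
    · obtain ⟨rfl, rfl⟩ := hkli
      simp [hb hkl, hkl]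
    · by_cases hklj : k = j ∧ l = i
      · obtain ⟨rfl, rfl⟩ := hklj
        simp [hc hkl, hkl]
      · have hlk : ¬(l = i ∧ k = j) := fun h => hklj ⟨h.2, h.1⟩
        rw [h0 (by tauto)]
        simp [hkl, hkli, hlk]

namespace IsSignedPermCovariant

variable [CommRing R] {L : Matrix n n R →ₗ[R] Matrix n n R}

lemma apply_single_apply_perm (hL : IsSignedPermCovariant L) (σ : Equiv.Perm n) (k l i j : n) :
    L (single (σ k) (σ l) 1) (σ i) (σ j) = L (single k l 1) i j := by
  have h := hL 1 σ (fun _ => Or.inl rfl) (single k l 1)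
  rw [signedPerm_mul_single_mul_transpose, Pi.one_apply, Pi.one_apply, mul_one, one_smul] at h
  simpa [h] using signedPerm_mul_mul_transpose_apply 1 σ (L (single k l 1)) i j

lemma sign_mul_apply_single_apply (hL : IsSignedPermCovariant L) (s : n → R)
    (hs : ∀ i, s i = 1 ∨ s i = -1) (k l i j : n) :
    s k * s l * L (single k l 1) i j = s i * s j * L (single k l 1) i j := by
  have h := hL s 1 hs (single k l 1)
  rw [signedPerm_mul_single_mul_transpose] at h
  have := signedPerm_mul_mul_transpose_apply s 1 (L (single k l 1)) i j
  rw [← h, map_smul] at this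
  simp only [Equiv.Perm.coe_one, id_eq, Matrix.smul_apply, smul_eq_mul] at this
  linear_combination this

lemma paired_of_apply_single_ne_zero [NoZeroDivisors R] [CharZero R]
    (hL : IsSignedPermCovariant L) {k l i j : n} (h : L (single k l 1) i j ≠ 0) :
    (k = l ∧ i = j) ∨ (k = i ∧ l = j) ∨ (k = j ∧ l = i) := by
  refine paired_of_forall_iff fun t => ?_
  have hs := hL.sign_mul_apply_single_apply (fun x => if x = t then -1 else 1)
    (fun x => by by_cases hx : x = t <;> simp [hx]) k l i j
  have hflip : ∀ x y : n, (if x = t then (-1 : R) else 1) * (if y = t then -1 else 1) =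
      if (x = t ↔ y = t) then 1 else -1 := by
    intro x y
    split_ifs <;> simp_all
  simp only [hflip] at hs
  split_ifs at hs <;> simp only [one_mul, neg_one_mul, self_eq_neg, neg_eq_self] at hs <;> tauto

lemma apply_single_apply_eq_zero [NoZeroDivisors R] [CharZero R]
    (hL : IsSignedPermCovariant L) {k l i j : n}
    (h : ¬((k = l ∧ i = j) ∨ (k = i ∧ l = j) ∨ (k = j ∧ l = i))) :
    L (single k l 1) i j = 0 :=
  not_not.mp (mt hL.paired_of_apply_single_ne_zero h)

theorem exists_eq_hyperoctahedralLinearMap [NoZeroDivisors R] [CharZero R] [Nontrivial n]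
    (hL : IsSignedPermCovariant L) :
    ∃ β b c e : R, L = hyperoctahedralLinearMap β b c e := by
  obtain ⟨p, q, hpq⟩ := exists_pair_ne n
  refine ⟨_, _, _, _, eq_hyperoctahedralLinearMap_of_apply_single (α := L (single p p 1) p p)
    (β := L (single p p 1) q q) (b := L (single p q 1) p q) (c := L (single p q 1) q p)
    (fun k => ?_) (fun hki => ?_) (fun hkl => ?_) (fun hkl => ?_) hL.apply_single_apply_eq_zero⟩
  · simpa using hL.apply_single_apply_perm (Equiv.swap p k) p p p p
  · obtain ⟨σ, rfl, rfl⟩ := Equiv.Perm.exists_apply_eq_and_apply_eq hpq hki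
    exact hL.apply_single_apply_perm σ p p q q
  · obtain ⟨σ, rfl, rfl⟩ := Equiv.Perm.exists_apply_eq_and_apply_eq hpq hkl
    exact hL.apply_single_apply_perm σ p q p q
  · obtain ⟨σ, rfl, rfl⟩ := Equiv.Perm.exists_apply_eq_and_apply_eq hpq hkl
    exact hL.apply_single_apply_perm σ p q q p

end IsSignedPermCovariant

theorem stmt_6 (d : ℕ) (hd : 2 ≤ d)
    (L : Matrix (Fin d) (Fin d) ℂ →ₗ[ℂ] Matrix (Fin d) (Fin d) ℂ)
    (hcov : ∀ (s : Fin d → ℂ) (σ : Equiv.Perm (Fin d)),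
      (∀ i, s i = 1 ∨ s i = -1) →
      ∀ X : Matrix (Fin d) (Fin d) ℂ,
        L ((Matrix.of fun i j => if i = σ j then s j else 0) * X *
              (Matrix.of fun i j => if i = σ j then s j else 0)ᵀ)
          = (Matrix.of fun i j => if i = σ j then s j else 0) * L X *
              (Matrix.of fun i j => if i = σ j then s j else 0)ᵀ) :
    ∃ a b c e : ℂ, ∀ X : Matrix (Fin d) (Fin d) ℂ,
      L X = a • ((X.trace / d) • (1 : Matrix (Fin d) (Fin d) ℂ)) + b • X + c • Xᵀ +
        e • Matrix.diagonal (fun i => X i i) := by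
  have : Nontrivial (Fin d) := Fin.nontrivial_iff_two_le.mpr hd
  obtain ⟨β, b, c, e, rfl⟩ :=
    IsSignedPermCovariant.exists_eq_hyperoctahedralLinearMap (L := L) hcov
  refine ⟨d * β, b, c, e, fun X => ?_⟩
  have hd0 : (d : ℂ) ≠ 0 := by exact_mod_cast (by omega : d ≠ 0)
  have hcoeff : d * β * (X.trace / d) = β * X.trace := by field_simp
  rw [hyperoctahedralLinearMap_apply, smul_smul, smul_smul, hcoeff]
  rfl
end

section
/- The quantum channel ψ_{a,b,c}(X) = a(Tr X/d)Id_d + bX + cXᵀ + (1−a−b−c)diag(X) on M_d(ℂ) is completely positive and trace preserving if and only if 0 ≤ a ≤ d/(d−1), a/d − 1/(d−1) ≤ b ≤ 1 − (d−1)a/d, and −a/d ≤ c ≤ a/d. -/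
/-!
The Choi matrix of `ψ_{a,b,c}` is `(a/d) I + b |Ω⟩⟨Ω| + c F + (1-a-b-c) Δ`, where `Ω = ∑ eᵢᵢ`,
`F` is the swap and `Δ` the projection onto `span {eᵢᵢ}`. It is block diagonal: on each pair
`e_{ij}, e_{ji}` (`i ≠ j`) it is `!![a/d, c; c, a/d]`, with eigenvalues `a/d ± c`, and on
`span {eᵢᵢ}` it is `(a/d + 1 - a - b) I + b J`, with eigenvalues `a/d + 1 - a - b` (on `Ω⊥`) and
`a/d + 1 - a + (d-1) b` (on `Ω`). Positivity is therefore equivalent to these four numbers being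
nonnegative: necessity by testing the eigenvectors `e₀₁ ± e₁₀`, `e₀₀ - e₁₁` and `Ω`, sufficiency
by bounding the quadratic form (AM-GM off the diagonal, Cauchy-Schwarz `|∑ xᵢᵢ|² ≤ d ∑ |xᵢᵢ|²`
on it). Trace preservation holds for all `a, b, c`, and the stated inequalities are a
rearrangement of the eigenvalue conditions.
-/

open Matrix Kronecker ComplexOrder

/-- The map `ψ_{a,b,c}(X) = a (Tr X / d) Id + b X + c Xᵀ + (1-a-b-c) diag(X)`. -/
noncomputable def psi (d : ℕ) (a b c : ℂ) (X : Matrix (Fin d) (Fin d) ℂ) :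
    Matrix (Fin d) (Fin d) ℂ :=
  (a * (X.trace / d)) • (1 : Matrix (Fin d) (Fin d) ℂ) + b • X + c • Xᵀ +
    (1 - a - b - c) • Matrix.diagonal (fun i => X i i)

/-- The (unnormalized) Choi matrix of a map on `M_d(ℂ)`. -/
noncomputable def choi (d : ℕ)
    (L : Matrix (Fin d) (Fin d) ℂ → Matrix (Fin d) (Fin d) ℂ) :
    Matrix (Fin d × Fin d) (Fin d × Fin d) ℂ :=
  ∑ i : Fin d, ∑ j : Fin d,
    (Matrix.single i j (1 : ℂ)) ⊗ₖ L (Matrix.single i j (1 : ℂ))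

open ComplexConjugate

lemma Matrix.trace_single_eq_ite {n R : Type*} [Fintype n] [DecidableEq n] [AddCommMonoid R]
    (i j : n) (r : R) : (single i j r).trace = if i = j then r else 0 := by
  split_ifs with h
  · exact h ▸ trace_single_eq_same i r
  · exact trace_single_eq_of_ne i j r h

lemma Matrix.star_single_add_single_dotProduct_mulVec {n R : Type*} [Fintype n] [DecidableEq n]
    [CommRing R] [StarRing R] (A : Matrix n n R) (i j : n) (s : R) :
    star (Pi.single i 1 + Pi.single j s) ⬝ᵥ A *ᵥ (Pi.single i 1 + Pi.single j s) =
      A i i + A i j * s + star s * A j i + star s * A j j * s := by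
  simp [dotProduct_mulVec, Pi.star_single, add_vecMul, single_vecMul, dotProduct_add]
  ring

lemma Matrix.PosSemidef.sum_sum_nonneg {n R : Type*} [Fintype n] [CommRing R] [PartialOrder R]
    [StarRing R] {A : Matrix n n R} (hA : A.PosSemidef) : 0 ≤ ∑ i, ∑ j, A i j := by
  simpa [dotProduct, mulVec, Finset.sum_comm] using hA.dotProduct_mulVec_nonneg 1

lemma norm_sum_sq_le_card_mul_sum_norm_sq {ι E : Type*} [Fintype ι] [SeminormedAddCommGroup E]
    (f : ι → E) : ‖∑ i, f i‖ ^ 2 ≤ Fintype.card ι * ∑ i, ‖f i‖ ^ 2 :=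
  calc ‖∑ i, f i‖ ^ 2 ≤ (∑ i, ‖f i‖) ^ 2 := by gcongr; exact norm_sum_le _ _
    _ ≤ _ := sq_sum_le_card_mul_sum_sq

lemma Complex.abs_re_conj_mul_le (u v : ℂ) :
    |(conj u * v).re| ≤ (‖u‖ ^ 2 + ‖v‖ ^ 2) / 2 :=
  calc |(conj u * v).re| ≤ ‖u‖ * ‖v‖ := by simpa using abs_re_le_norm (conj u * v)
    _ ≤ _ := by nlinarith [sq_nonneg (‖u‖ - ‖v‖)]

lemma add_mul_sum_norm_sq_diag_le {α : Type*} [Fintype α] [DecidableEq α]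
    (x : α × α → ℂ) {t c : ℝ} (hc : |c| ≤ t) :
    (t + c) * ∑ i, ‖x (i, i)‖ ^ 2 ≤
      t * ∑ p, ‖x p‖ ^ 2 + c * ∑ p, (conj (x p) * x p.swap).re := by
  -- The antisymmetric term `t (‖x p‖² - ‖x p.swap‖²) / 2` sums to zero; adding it makes the
  -- off-diagonal summands nonnegative.
  have pointwise (p : α × α) :
      t * (‖x p‖ ^ 2 - ‖x p.swap‖ ^ 2) / 2 + (if p.1 = p.2 then (t + c) * ‖x p‖ ^ 2 else 0) ≤
        t * ‖x p‖ ^ 2 + c * (conj (x p) * x p.swap).re := by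
    obtain ⟨i, j⟩ := p
    dsimp only
    split_ifs with h
    · subst h
      simp only [sub_self, Prod.swap_prod_mk, Complex.conj_mul', ← Complex.ofReal_pow,
        Complex.ofReal_re]
      linarith
    · have := Complex.abs_re_conj_mul_le (x (i, j)) (x (j, i))
      rw [abs_le] at hc this
      simp only [Prod.swap_prod_mk]
      nlinarith
  have swap_sum : ∑ p : α × α, ‖x p.swap‖ ^ 2 = ∑ p, ‖x p‖ ^ 2 :=
    (Equiv.prodComm α α).sum_comp fun p => ‖x p‖ ^ 2
  calc (t + c) * ∑ i, ‖x (i, i)‖ ^ 2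
      = ∑ p : α × α, (t * (‖x p‖ ^ 2 - ‖x p.swap‖ ^ 2) / 2 +
          (if p.1 = p.2 then (t + c) * ‖x p‖ ^ 2 else 0)) := by
        rw [Finset.sum_add_distrib, ← Finset.sum_div, ← Finset.mul_sum, Finset.sum_sub_distrib,
          swap_sum]
        simp [Finset.mul_sum, Fintype.sum_prod_type]
    _ ≤ _ := by
        rw [Finset.mul_sum, Finset.mul_sum, ← Finset.sum_add_distrib]
        exact Finset.sum_le_sum fun p _ => pointwise p

lemma choi_apply (d : ℕ) (L : Matrix (Fin d) (Fin d) ℂ → Matrix (Fin d) (Fin d) ℂ)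
    (i k j l : Fin d) : choi d L (i, k) (j, l) = L (single i j 1) k l := by
  simp [choi, Matrix.sum_apply, Matrix.single, Matrix.kroneckerMap_apply, ite_and]

lemma isHermitian_choi {d : ℕ} {L : Matrix (Fin d) (Fin d) ℂ → Matrix (Fin d) (Fin d) ℂ}
    (hL : ∀ X, L Xᴴ = (L X)ᴴ) : (choi d L).IsHermitian := by
  ext ⟨i, k⟩ ⟨j, l⟩
  rw [conjTranspose_apply, choi_apply, choi_apply, ← conjTranspose_apply, ← hL,
    conjTranspose_single, star_one]

lemma psi_conjTranspose (d : ℕ) (a b c : ℝ) (X : Matrix (Fin d) (Fin d) ℂ) :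
    psi d a b c Xᴴ = (psi d a b c X)ᴴ := by
  ext k l
  rcases eq_or_ne k l with rfl | h
  · simp [psi, trace_conjTranspose]
  · simp [psi, h, h.symm]

lemma psi_trace (d : ℕ) (a b c : ℂ) (X : Matrix (Fin d) (Fin d) ℂ) :
    (psi d a b c X).trace = X.trace := by
  rcases Nat.eq_zero_or_pos d with rfl | hd
  · simp [Matrix.trace]
  · have : (Matrix.diagonal fun i => X i i).trace = X.trace := by simp [Matrix.trace]
    simp only [psi, trace_add, trace_smul, trace_one, trace_transpose, this, smul_eq_mul,
      Fintype.card_fin]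
    field_simp
    ring

lemma choi_psi_apply (d : ℕ) (a b c : ℂ) (i k j l : Fin d) :
    choi d (psi d a b c) (i, k) (j, l) =
      (if i = j ∧ k = l then a / d else 0) + (if i = k ∧ j = l then b else 0) +
      (if i = l ∧ j = k then c else 0) +
      (if i = j ∧ i = k ∧ i = l then 1 - a - b - c else 0) := by
  rw [choi_apply]
  simp only [psi, trace_single_eq_ite, Matrix.add_apply, Matrix.smul_apply, one_apply,
    transpose_apply, diagonal_apply, single_apply, smul_eq_mul]
  split_ifs <;> grind

lemma star_dotProduct_choi_psi_mulVec (d : ℕ) (a b c : ℂ) (x : Fin d × Fin d → ℂ) :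
    star x ⬝ᵥ choi d (psi d a b c) *ᵥ x =
      a / d * ∑ p, conj (x p) * x p + b * (conj (∑ i, x (i, i)) * ∑ i, x (i, i)) +
        c * ∑ p, conj (x p) * x p.swap + (1 - a - b - c) * ∑ i, conj (x (i, i)) * x (i, i) := by
  simp [dotProduct, mulVec, Fintype.sum_prod_type, choi_psi_apply, add_mul,
    Finset.sum_add_distrib, Finset.mul_sum, Finset.sum_mul, ite_and, ite_mul, Finset.sum_ite_eq,
    Finset.sum_ite_eq', mul_left_comm]
  exact Finset.sum_comm

variable {d : ℕ} {a b c : ℝ}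

lemma posSemidef_choi_psi (hc : |c| ≤ a / d) (hμ : 0 ≤ a / d + 1 - a - b)
    (hν : 0 ≤ a / d + 1 - a + (d - 1) * b) : (choi d (psi d a b c)).PosSemidef := by
  have hherm := isHermitian_choi (psi_conjTranspose d a b c)
  refine .of_dotProduct_mulVec_nonneg hherm fun x => Complex.nonneg_iff.mpr
    ⟨?_, (hherm.im_star_dotProduct_mulVec_self x).symm⟩
  rw [star_dotProduct_choi_psi_mulVec]
  simp only [Complex.conj_mul', ← Complex.ofReal_natCast, ← Complex.ofReal_div,
    ← Complex.ofReal_one, ← Complex.ofReal_sub, ← Complex.ofReal_pow, ← Complex.ofReal_sum,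
    Complex.add_re, Complex.re_ofReal_mul, Complex.re_sum, Complex.ofReal_re]
  have hswap := add_mul_sum_norm_sq_diag_le x hc
  have hCS : ‖∑ i, x (i, i)‖ ^ 2 ≤ d * ∑ i, ‖x (i, i)‖ ^ 2 := by
    simpa using norm_sum_sq_le_card_mul_sum_norm_sq fun i => x (i, i)
  have hdiag : 0 ≤ ∑ i, ‖x (i, i)‖ ^ 2 := by positivity
  rcases le_or_gt 0 b with hb | hb
  · nlinarith [mul_nonneg hμ hdiag, mul_nonneg hb (sq_nonneg ‖∑ i, x (i, i)‖)]
  · nlinarith [mul_nonneg hν hdiag, mul_le_mul_of_nonpos_left hCS hb.le]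

lemma abs_le_of_posSemidef_choi_psi (hd : 2 ≤ d) (h : (choi d (psi d a b c)).PosSemidef) :
    |c| ≤ a / d := by
  have hne : (⟨0, by omega⟩ : Fin d) ≠ ⟨1, by omega⟩ := by simp
  have key (s : ℂ) := h.dotProduct_mulVec_nonneg
    (Pi.single (⟨0, by omega⟩, ⟨1, by omega⟩) 1 + Pi.single (⟨1, by omega⟩, ⟨0, by omega⟩) s)
  simp only [star_single_add_single_dotProduct_mulVec] at key
  simp [choi_psi_apply, hne, hne.symm] at key
  have hplus := key 1
  have hminus := key (-1)
  norm_num at hplus hminus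
  have hplus' : (0 : ℝ) ≤ a / d + c + c + a / d := by exact_mod_cast hplus
  have hminus' : (0 : ℝ) ≤ a / d + -c + -c + a / d := by exact_mod_cast hminus
  rw [abs_le]
  constructor <;> linarith

lemma sub_nonneg_of_posSemidef_choi_psi (hd : 2 ≤ d) (h : (choi d (psi d a b c)).PosSemidef) :
    0 ≤ a / d + 1 - a - b := by
  have hne : (⟨0, by omega⟩ : Fin d) ≠ ⟨1, by omega⟩ := by simp
  have key := h.dotProduct_mulVec_nonneg
    (Pi.single (⟨0, by omega⟩, ⟨0, by omega⟩) 1 + Pi.single (⟨1, by omega⟩, ⟨1, by omega⟩) (-1))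
  rw [star_single_add_single_dotProduct_mulVec] at key
  simp [choi_psi_apply, hne, hne.symm] at key
  have : (0 : ℝ) ≤ a / d + (1 - a) - b - b + (a / d + (1 - a)) := by exact_mod_cast key
  linarith

lemma add_mul_nonneg_of_posSemidef_choi_psi (hd : 0 < d) (h : (choi d (psi d a b c)).PosSemidef) :
    0 ≤ a / d + 1 - a + (d - 1) * b := by
  have key := (h.submatrix fun i : Fin d => (i, i)).sum_sum_nonneg
  simp [choi_psi_apply, Finset.sum_add_distrib,
    fun i j : Fin d => (and_iff_left_of_imp Eq.symm : i = j ∧ j = i ↔ i = j)] at key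
  have key' : (0 : ℝ) ≤ d * (a / d + 1 - a + (d - 1) * b) := by
    have : (0 : ℝ) ≤ d * (a / d) + d * (d * b) + d * (1 - a - b) := by exact_mod_cast key
    linarith
  exact nonneg_of_mul_nonneg_right key' (by positivity)

theorem posSemidef_choi_psi_iff (hd : 2 ≤ d) :
    (choi d (psi d a b c)).PosSemidef ↔
      |c| ≤ a / d ∧ 0 ≤ a / d + 1 - a - b ∧ 0 ≤ a / d + 1 - a + (d - 1) * b :=
  ⟨fun h => ⟨abs_le_of_posSemidef_choi_psi hd h, sub_nonneg_of_posSemidef_choi_psi hd h,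
      add_mul_nonneg_of_posSemidef_choi_psi (by omega) h⟩,
    fun ⟨hc, hμ, hν⟩ => posSemidef_choi_psi hc hμ hν⟩

theorem stmt_8 (d : ℕ) (hd : 2 ≤ d) (a b c : ℝ) :
    ((choi d (psi d (a : ℂ) (b : ℂ) (c : ℂ))).PosSemidef ∧
      ∀ X : Matrix (Fin d) (Fin d) ℂ, (psi d (a : ℂ) (b : ℂ) (c : ℂ) X).trace = X.trace) ↔
    (0 ≤ a ∧ a ≤ d / ((d : ℝ) - 1) ∧
      a / d - 1 / ((d : ℝ) - 1) ≤ b ∧ b ≤ 1 - ((d : ℝ) - 1) * a / d ∧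
      -(a / d) ≤ c ∧ c ≤ a / d) := by
  have hd₀ : (0 : ℝ) < d := by positivity
  have hd₁ : (0 : ℝ) < d - 1 := by
    have : (2 : ℝ) ≤ d := by exact_mod_cast hd
    linarith
  have lower : a / d - 1 / ((d : ℝ) - 1) ≤ b ↔ 0 ≤ a / d + 1 - a + (d - 1) * b := by
    have : (b - (a / d - 1 / ((d : ℝ) - 1))) * (d - 1) = a / d + 1 - a + (d - 1) * b := by
      field_simp
      ring
    rw [← sub_nonneg, ← this, mul_nonneg_iff_of_pos_right hd₁]
  have upper : ((d : ℝ) - 1) * a / d = a - a / d := by field_simp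
  rw [and_iff_left fun X => psi_trace d _ _ _ X, posSemidef_choi_psi_iff hd, abs_le, lower, upper]
  constructor
  · rintro ⟨⟨hc₁, hc₂⟩, hμ, hν⟩
    refine ⟨by simpa using (le_div_iff₀ hd₀).mp (by linarith : 0 ≤ a / d), ?_, hν, by linarith,
      hc₁, hc₂⟩
    have : 0 ≤ (a / d + 1 - a) * d := by nlinarith
    field_simp at this
    rw [le_div_iff₀ hd₁]
    linarith
  · rintro ⟨-, -, hν, hμ, hc₁, hc₂⟩
    exact ⟨⟨hc₁, hc₂⟩, by linarith, hν⟩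
end

section
/- Let d ≥ 3 and let ψ_{a,b,c}(X) = a(Tr X/d)Id_d + bX + cXᵀ + (1−a−b−c)diag(X) with a,b,c real. If (a,b,c) violates the inequality (d−2)a/d + b + c ≤ 1, then for the unit vector ξ = (|1⟩+|2⟩)/√2, the matrix ψ_{a,b,c}(|ξ⟩⟨ξ|) is not positive semidefinite. -/
open Matrix ComplexOrder

/-!
Test the positivity of `ψ(|ξ⟩⟨ξ|)` against `e₁ - e₂`. All four entries of `|ξ⟩⟨ξ|`
on the block `{1, 2}` equal `1/2`, so the `b X` and `c Xᵀ` terms drop out of the quadratic form,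
which equals `2a/d + 1 - a - b - c`; this is negative exactly when the inequality is violated.
-/

theorem Matrix.PosSemidef.entry_sub_entry_nonneg {n R : Type*} [Fintype n] [DecidableEq n]
    [CommRing R] [PartialOrder R] [StarRing R] {M : Matrix n n R} (hM : M.PosSemidef)
    (i j : n) : 0 ≤ M i i - M i j - M j i + M j j := by
  have key := hM.dotProduct_mulVec_nonneg (Pi.single i 1 - Pi.single j 1)
  rw [star_sub, ← Pi.single_star, ← Pi.single_star, star_one, mulVec_sub, mulVec_single,
    mulVec_single, sub_dotProduct, dotProduct_sub, dotProduct_sub, single_dotProduct,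
    single_dotProduct, single_dotProduct, single_dotProduct] at key
  simpa [sub_add] using key

theorem psi_apply (d : ℕ) (a b c : ℂ) (X : Matrix (Fin d) (Fin d) ℂ) (k l : Fin d) :
    psi d a b c X k l = a * (X.trace / d) * (1 : Matrix (Fin d) (Fin d) ℂ) k l + b * X k l +
      c * X l k + (1 - a - b - c) * (if k = l then X k k else 0) := by
  simp only [psi, Matrix.add_apply, Matrix.smul_apply, smul_eq_mul, transpose_apply, diagonal_apply]

theorem psi_entry_sub_entry {d : ℕ} (a b c : ℂ) (X : Matrix (Fin d) (Fin d) ℂ) {i j : Fin d}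
    (hij : i ≠ j) :
    psi d a b c X i i - psi d a b c X i j - psi d a b c X j i + psi d a b c X j j =
      2 * a * (X.trace / d) + (b + c) * (X i i - X i j - X j i + X j j) +
        (1 - a - b - c) * (X i i + X j j) := by
  simp only [psi_apply, one_apply, if_true, if_neg hij, if_neg hij.symm]
  ring

noncomputable def pairVec {d : ℕ} (i j : Fin d) : Fin d → ℂ :=
  fun k => if k = i ∨ k = j then ((Real.sqrt 2 : ℂ))⁻¹ else 0

theorem vecMulVec_pairVec_apply {d : ℕ} {i j k l : Fin d} (hk : k = i ∨ k = j)
    (hl : l = i ∨ l = j) : vecMulVec (pairVec i j) (star (pairVec i j)) k l = 1 / 2 := by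
  rw [vecMulVec_apply, Pi.star_apply, pairVec, pairVec, if_pos hk, if_pos hl, star_inv₀,
    Complex.star_def, Complex.conj_ofReal, ← mul_inv, ← Complex.ofReal_mul,
    Real.mul_self_sqrt zero_le_two]
  norm_num

theorem trace_vecMulVec_pairVec {d : ℕ} {i j : Fin d} (hij : i ≠ j) :
    (vecMulVec (pairVec i j) (star (pairVec i j))).trace = 1 := by
  rw [trace, Fintype.sum_eq_add i j hij, diag_apply, diag_apply,
    vecMulVec_pairVec_apply (.inl rfl) (.inl rfl), vecMulVec_pairVec_apply (.inr rfl) (.inr rfl)]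
  · norm_num
  · rintro k ⟨hki, hkj⟩
    simp [vecMulVec_apply, pairVec, hki, hkj]

theorem psi_vecMulVec_pairVec_entry_sub_entry {d : ℕ} (a b c : ℂ) {i j : Fin d} (hij : i ≠ j) :
    let M := psi d a b c (vecMulVec (pairVec i j) (star (pairVec i j)))
    M i i - M i j - M j i + M j j = 2 * a / d + 1 - a - b - c := by
  dsimp only
  rw [psi_entry_sub_entry _ _ _ _ hij, trace_vecMulVec_pairVec hij,
    vecMulVec_pairVec_apply (.inl rfl) (.inl rfl), vecMulVec_pairVec_apply (.inl rfl) (.inr rfl),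
    vecMulVec_pairVec_apply (.inr rfl) (.inl rfl), vecMulVec_pairVec_apply (.inr rfl) (.inr rfl)]
  ring

theorem stmt_9 (d : ℕ) (hd : 3 ≤ d) (a b c : ℝ)
    (hviol : ¬ (((d : ℝ) - 2) * a / d + b + c ≤ 1)) :
    ¬ (psi d (a : ℂ) (b : ℂ) (c : ℂ)
        (Matrix.vecMulVec
          (fun i : Fin d =>
            if i = (⟨0, by omega⟩ : Fin d) ∨ i = (⟨1, by omega⟩ : Fin d) then
              ((Real.sqrt 2 : ℂ))⁻¹ else 0)
          (star fun i : Fin d =>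
            if i = (⟨0, by omega⟩ : Fin d) ∨ i = (⟨1, by omega⟩ : Fin d) then
              ((Real.sqrt 2 : ℂ))⁻¹ else 0))).PosSemidef := by
  set i : Fin d := ⟨0, by omega⟩
  set j : Fin d := ⟨1, by omega⟩
  change ¬ (psi d a b c (vecMulVec (pairVec i j) (star (pairVec i j)))).PosSemidef
  intro hpsd
  have hij : i ≠ j := by simp [i, j, Fin.ext_iff]
  have key := hpsd.entry_sub_entry_nonneg i j
  rw [psi_vecMulVec_pairVec_entry_sub_entry _ _ _ hij] at key
  have hform : 0 ≤ 2 * a / d + 1 - a - b - c := by exact_mod_cast key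
  have hd0 : (d : ℝ) ≠ 0 := by positivity
  apply hviol
  rw [show ((d : ℝ) - 2) * a / d = a - 2 * a / d by field_simp]
  linarith
end
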